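/- Nishimori gauge identity for squared correlations: for every pair of bonds b, b' ∈ B, [⟨S_b⟩⟨S_{b'}⟩²] = [⟨S_b⟩²⟨S_{b'}⟩²]. -/

import Mathlib

/-!
On the Nishimori line the law of the couplings has density `exp (-∑ x_b² / 2) · exp U(j, +)`
with respect to the centred Gaussian law, `+` being the all-up configuration. The gauge
transformation `j_b ↦ τ_n τ_n' j_b` preserves the centred law, turns `U(j, +)` into `U(j, τ)` and
multiplies `⟨S_b⟩` by `τ_n τ_n'`. Averaging over all gauges `τ` writes any quenched average `[F]` as
a centred Gaussian integral of `Z(j) ⟨F(τ·j)⟩`, the inner average being a Gibbs average over `τ`.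
For `F = ⟨S_b⟩⟨S_b'⟩²` it is `⟨S_b⟩ · ⟨S_b⟩⟨S_b'⟩²`, and for `F = ⟨S_b⟩²⟨S_b'⟩²` it is `F` itself.
-/

open MeasureTheory ProbabilityTheory Filter

noncomputable section

/-- The real value ±1 of a Boolean spin. -/
def spin (s : Bool) : ℝ := if s then 1 else -1

/-- The bond spin `S_b = S_n S_{n'}` for a bond `b` with endpoints `ep b = (n, n')`. -/
def bondSpin {V ι : Type*} (ep : ι → V × V) (S : V → Bool) (b : ι) : ℝ :=
  spin (S (ep b).1) * spin (S (ep b).2)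

/-- The potential `U(j, S) = Σ_b x_b j_b S_b`. -/
def potential {V ι : Type*} [Fintype ι] (ep : ι → V × V) (x j : ι → ℝ)
    (S : V → Bool) : ℝ :=
  ∑ b, x b * j b * bondSpin ep S b

/-- The partition function `Z(j) = Σ_S exp U(j,S)`. -/
def partitionFn {V ι : Type*} [Fintype V] [DecidableEq V] [Fintype ι]
    (ep : ι → V × V) (x j : ι → ℝ) : ℝ :=
  ∑ S : V → Bool, Real.exp (potential ep x j S)

/-- The Boltzmann–Gibbs expectation `⟨f⟩` at fixed disorder `j`. -/
def gibbs {V ι : Type*} [Fintype V] [DecidableEq V] [Fintype ι]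
    (ep : ι → V × V) (x j : ι → ℝ) (f : (V → Bool) → ℝ) : ℝ :=
  (∑ S : V → Bool, f S * Real.exp (potential ep x j S)) / partitionFn ep x j

/-- The law of the couplings: independent Gaussians, `j_b` of mean `x_b` and variance 1. -/
def couplings {ι : Type*} [Fintype ι] (x : ι → ℝ) : Measure (ι → ℝ) :=
  Measure.pi fun b => gaussianReal (x b) 1

/-- The quenched average `[F]`. -/
def quenched {ι : Type*} [Fintype ι] (x : ι → ℝ) (F : (ι → ℝ) → ℝ) : ℝ :=
  ∫ j, F j ∂(couplings x)

/-- The quenched pressure `P({x}) = [ln Z]`. -/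
def pressure {V ι : Type*} [Fintype V] [DecidableEq V] [Fintype ι]
    (ep : ι → V × V) (x : ι → ℝ) : ℝ :=
  quenched x fun j => Real.log (partitionFn ep x j)

open scoped ENNReal NNReal

theorem MeasureTheory.lintegral_pi_prod_eq_prod {ι : Type*} [Fintype ι] {E : ι → Type*}
    [∀ i, MeasurableSpace (E i)] (μ : ∀ i, Measure (E i)) [∀ i, IsProbabilityMeasure (μ i)]
    {f : ∀ i, E i → ℝ≥0∞} (hf : ∀ i, Measurable (f i)) :
    ∫⁻ x, ∏ i, f i (x i) ∂Measure.pi μ = ∏ i, ∫⁻ t, f i t ∂μ i := by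
  rw [lintegral_prod_eq_prod_lintegral_of_indepFun _ _ (iIndepFun_pi fun i ↦ (hf i).aemeasurable)
    fun i ↦ (hf i).comp (measurable_pi_apply i)]
  exact Finset.prod_congr rfl fun i _ ↦ (measurePreserving_eval μ i).lintegral_comp (hf i)

theorem MeasureTheory.Measure.pi_withDensity {ι : Type*} [Fintype ι] {E : ι → Type*}
    [∀ i, MeasurableSpace (E i)] (μ : ∀ i, Measure (E i)) [∀ i, IsProbabilityMeasure (μ i)]
    {f : ∀ i, E i → ℝ≥0∞} (hf : ∀ i, Measurable (f i))
    [∀ i, SigmaFinite ((μ i).withDensity (f i))] :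
    Measure.pi (fun i ↦ (μ i).withDensity (f i)) =
      (Measure.pi μ).withDensity (fun x ↦ ∏ i, f i (x i)) := by
  refine Measure.pi_eq (μ := fun i ↦ (μ i).withDensity (f i)) fun s hs ↦ ?_
  have hbox : (Set.univ.pi s).indicator (fun x ↦ ∏ i, f i (x i)) =
      fun x ↦ ∏ i, (s i).indicator (f i) (x i) := by
    ext x
    by_cases hx : ∀ i, x i ∈ s i
    · rw [Set.indicator_of_mem (Set.mem_univ_pi.mpr hx)]
      exact Finset.prod_congr rfl fun i _ ↦ (Set.indicator_of_mem (hx i) _).symm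
    · obtain ⟨i, hi⟩ := not_forall.mp hx
      rw [Set.indicator_of_notMem (mt Set.mem_univ_pi.mp hx)]
      exact (Finset.prod_eq_zero (Finset.mem_univ i) (Set.indicator_of_notMem hi _)).symm
  rw [withDensity_apply _ (.univ_pi hs), ← lintegral_indicator (.univ_pi hs), hbox,
    lintegral_pi_prod_eq_prod μ fun i ↦ (hf i).indicator (hs i)]
  exact Finset.prod_congr rfl fun i _ ↦ by
    rw [lintegral_indicator (hs i), withDensity_apply _ (hs i)]

theorem ProbabilityTheory.gaussianReal_eq_withDensity (m : ℝ) {v : ℝ≥0} (hv : v ≠ 0) :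
    gaussianReal m v = (gaussianReal 0 v).withDensity
      (fun t ↦ ENNReal.ofReal (Real.exp ((m * t - m ^ 2 / 2) / v))) := by
  rw [gaussianReal_of_var_ne_zero m hv, gaussianReal_of_var_ne_zero 0 hv,
    ← withDensity_mul _ (measurable_gaussianPDF 0 v) (by fun_prop)]
  congr 1
  ext t
  rw [Pi.mul_apply, gaussianPDF, gaussianPDF, ← ENNReal.ofReal_mul (gaussianPDFReal_nonneg 0 v t),
    gaussianPDFReal, gaussianPDFReal, mul_assoc _ (Real.exp _), ← Real.exp_add]
  congr 3
  have : (v : ℝ) ≠ 0 := NNReal.coe_ne_zero.mpr hv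
  field_simp
  ring

lemma ProbabilityTheory.measurePreserving_const_mul_gaussianReal {c : ℝ} (hc : c * c = 1)
    (v : ℝ≥0) : MeasurePreserving (c * ·) (gaussianReal 0 v) (gaussianReal 0 v) where
  measurable := measurable_const_mul c
  map_eq := by
    rw [gaussianReal_map_const_mul, mul_zero]
    congr
    ext
    simp [sq, hc]

lemma spin_beq (a c : Bool) : spin (a == c) = spin a * spin c := by
  cases a <;> cases c <;> norm_num [spin]

lemma spin_mul_self (a : Bool) : spin a * spin a = 1 := by
  cases a <;> norm_num [spin]

lemma abs_spin (a : Bool) : |spin a| = 1 := by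
  cases a <;> norm_num [spin]

section Gauge

variable {V ι : Type*} (ep : ι → V × V)

lemma bondSpin_mul_self (S : V → Bool) (b : ι) : bondSpin ep S b * bondSpin ep S b = 1 := by
  rw [bondSpin, mul_mul_mul_comm, spin_mul_self, spin_mul_self, one_mul]

lemma abs_bondSpin (S : V → Bool) (b : ι) : |bondSpin ep S b| = 1 := by
  rw [bondSpin, abs_mul, abs_spin, abs_spin, one_mul]

def flipSpins (τ : V → Bool) : Equiv.Perm (V → Bool) :=
  Function.Involutive.toPerm (fun S n ↦ S n == τ n) fun S ↦
    funext fun n ↦ show ((S n == τ n) == τ n) = S n by cases S n <;> cases τ n <;> rfl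

lemma flipSpins_apply (τ S : V → Bool) (n : V) : flipSpins τ S n = (S n == τ n) :=
  rfl

lemma flipSpins_flipSpins (τ S : V → Bool) : flipSpins τ (flipSpins τ S) = S :=
  (flipSpins τ).apply_symm_apply S

lemma bondSpin_flipSpins (τ S : V → Bool) (b : ι) :
    bondSpin ep (flipSpins τ S) b = bondSpin ep S b * bondSpin ep τ b := by
  simp only [bondSpin, flipSpins_apply, spin_beq]
  ring

def gaugeTransform (τ : V → Bool) (j : ι → ℝ) : ι → ℝ :=
  fun b ↦ bondSpin ep τ b * j b

lemma gaugeTransform_involutive (τ : V → Bool) : Function.Involutive (gaugeTransform ep τ) :=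
  fun j ↦ funext fun b ↦ by
    rw [gaugeTransform, gaugeTransform, ← mul_assoc, bondSpin_mul_self, one_mul]

variable [Fintype ι]

lemma potential_gaugeTransform (x : ι → ℝ) (τ : V → Bool) (j : ι → ℝ) (S : V → Bool) :
    potential ep x (gaugeTransform ep τ j) S = potential ep x j (flipSpins τ S) := by
  simp only [potential, gaugeTransform, bondSpin_flipSpins]
  exact Finset.sum_congr rfl fun b _ ↦ by ring

end Gauge

section Gibbs

variable {V ι : Type*} [Fintype V] [DecidableEq V] [Fintype ι] (ep : ι → V × V) (x j : ι → ℝ)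

lemma partitionFn_pos : 0 < partitionFn ep x j :=
  Finset.sum_pos (fun _ _ ↦ Real.exp_pos _) Finset.univ_nonempty

lemma partitionFn_mul_gibbs (f : (V → Bool) → ℝ) :
    partitionFn ep x j * gibbs ep x j f = ∑ S, f S * Real.exp (potential ep x j S) :=
  mul_div_cancel₀ _ (partitionFn_pos ep x j).ne'

lemma gibbs_const (c : ℝ) : gibbs ep x j (fun _ ↦ c) = c := by
  rw [gibbs, ← Finset.mul_sum, ← partitionFn, mul_div_cancel_right₀ _ (partitionFn_pos ep x j).ne']

lemma gibbs_mul_const (f : (V → Bool) → ℝ) (c : ℝ) :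
    gibbs ep x j (fun S ↦ f S * c) = gibbs ep x j f * c := by
  simp only [gibbs, mul_right_comm _ c, ← Finset.sum_mul, div_mul_eq_mul_div]

lemma abs_gibbs_le {f : (V → Bool) → ℝ} {C : ℝ} (hf : ∀ S, |f S| ≤ C) :
    |gibbs ep x j f| ≤ C := by
  have hZ := partitionFn_pos ep x j
  rw [gibbs, abs_div, abs_of_pos hZ, div_le_iff₀ hZ, partitionFn, Finset.mul_sum]
  refine (Finset.abs_sum_le_sum_abs _ _).trans (Finset.sum_le_sum fun S _ ↦ ?_)
  rw [abs_mul, abs_of_pos (Real.exp_pos _)]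
  exact mul_le_mul_of_nonneg_right (hf S) (Real.exp_pos _).le

@[fun_prop]
lemma continuous_gibbs (f : (V → Bool) → ℝ) : Continuous fun j ↦ gibbs ep x j f := by
  unfold gibbs
  refine Continuous.div (by unfold potential; fun_prop) (by unfold partitionFn potential; fun_prop)
    fun j ↦ (partitionFn_pos ep x j).ne'

lemma partitionFn_gaugeTransform (τ : V → Bool) :
    partitionFn ep x (gaugeTransform ep τ j) = partitionFn ep x j := by
  simp only [partitionFn, potential_gaugeTransform]
  exact Equiv.sum_comp (flipSpins τ) fun S ↦ Real.exp (potential ep x j S)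

lemma gibbs_gaugeTransform (τ : V → Bool) (f : (V → Bool) → ℝ) :
    gibbs ep x (gaugeTransform ep τ j) f = gibbs ep x j (fun S ↦ f (flipSpins τ S)) := by
  simp only [gibbs, partitionFn_gaugeTransform, potential_gaugeTransform]
  rw [← Equiv.sum_comp (flipSpins τ) fun S ↦ f (flipSpins τ S) * Real.exp (potential ep x j S)]
  simp only [flipSpins_flipSpins]

lemma gibbs_bondSpin_gaugeTransform (τ : V → Bool) (b : ι) :
    gibbs ep x (gaugeTransform ep τ j) (fun S ↦ bondSpin ep S b) =
      bondSpin ep τ b * gibbs ep x j (fun S ↦ bondSpin ep S b) := by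
  rw [gibbs_gaugeTransform]
  simp only [bondSpin_flipSpins]
  rw [gibbs_mul_const, mul_comm]

end Gibbs

section Couplings

variable {ι : Type*} [Fintype ι]

instance (x : ι → ℝ) : IsProbabilityMeasure (couplings x) := by
  unfold couplings
  infer_instance

def couplingsDensity (x j : ι → ℝ) : ℝ :=
  Real.exp (∑ b, (x b * j b - x b ^ 2 / 2))

@[fun_prop]
lemma measurable_couplingsDensity (x : ι → ℝ) : Measurable (couplingsDensity x) := by
  unfold couplingsDensity
  fun_prop

lemma couplings_eq_withDensity (x : ι → ℝ) :
    couplings x = (couplings 0).withDensity fun j ↦ ENNReal.ofReal (couplingsDensity x j) := by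
  have hdens (b : ι) := gaussianReal_eq_withDensity (x b) one_ne_zero
  simp only [NNReal.coe_one, div_one] at hdens
  have : ∀ b, SigmaFinite ((gaussianReal 0 1).withDensity
      fun t ↦ ENNReal.ofReal (Real.exp (x b * t - x b ^ 2 / 2))) := fun b ↦ by
    rw [← hdens b]
    infer_instance
  simp only [couplings, couplingsDensity, Pi.zero_apply, Real.exp_sum,
    ENNReal.ofReal_prod_of_nonneg fun b _ ↦ (Real.exp_pos _).le]
  rw [← Measure.pi_withDensity (fun _ ↦ gaussianReal 0 1)
    (f := fun b t ↦ ENNReal.ofReal (Real.exp (x b * t - x b ^ 2 / 2))) fun b ↦ by fun_prop]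
  exact congrArg Measure.pi (funext hdens)

lemma quenched_eq_integral_couplingsDensity_mul (x : ι → ℝ) (F : (ι → ℝ) → ℝ) :
    quenched x F = ∫ j, couplingsDensity x j * F j ∂couplings 0 := by
  rw [quenched, couplings_eq_withDensity, integral_withDensity_eq_integral_toReal_smul
    (by fun_prop) (ae_of_all _ fun _ ↦ ENNReal.ofReal_lt_top)]
  simp only [ENNReal.toReal_ofReal (Real.exp_pos _).le, smul_eq_mul, couplingsDensity]

lemma integrable_couplings_iff (x : ι → ℝ) (F : (ι → ℝ) → ℝ) :
    Integrable F (couplings x) ↔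
      Integrable (fun j ↦ couplingsDensity x j * F j) (couplings 0) := by
  rw [couplings_eq_withDensity, integrable_withDensity_iff_integrable_smul'
    (by fun_prop) (ae_of_all _ fun _ ↦ ENNReal.ofReal_lt_top)]
  simp only [ENNReal.toReal_ofReal (Real.exp_pos _).le, smul_eq_mul, couplingsDensity]

lemma measurePreserving_gaugeTransform {V : Type*} (ep : ι → V × V) (τ : V → Bool) :
    MeasurePreserving (gaugeTransform ep τ) (couplings 0) (couplings 0) :=
  measurePreserving_pi _ _ fun b ↦
    measurePreserving_const_mul_gaussianReal (bondSpin_mul_self ep τ b) _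

end Couplings

section Nishimori

variable {V ι : Type*} [Fintype ι] (ep : ι → V × V) (x : ι → ℝ)

lemma measurableEmbedding_gaugeTransform (τ : V → Bool) :
    MeasurableEmbedding (gaugeTransform ep τ) :=
  (MeasurableEquiv.ofInvolutive _ (gaugeTransform_involutive ep τ)
    (measurePreserving_gaugeTransform ep τ).measurable).measurableEmbedding

/-- The Nishimori condition, that the mean `x_b` of `j_b` is also its coefficient in `U`, is used
here. -/
lemma couplingsDensity_gaugeTransform (τ : V → Bool) (j : ι → ℝ) :
    couplingsDensity x (gaugeTransform ep τ j) =
      Real.exp (-∑ b, x b ^ 2 / 2) * Real.exp (potential ep x j τ) := by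
  rw [couplingsDensity, ← Real.exp_add, Finset.sum_sub_distrib, potential, neg_add_eq_sub]
  congr 2
  exact Finset.sum_congr rfl fun b _ ↦ by rw [gaugeTransform]; ring

lemma quenched_eq_integral_gaugeTransform (τ : V → Bool) (F : (ι → ℝ) → ℝ) :
    quenched x F = Real.exp (-∑ b, x b ^ 2 / 2) *
      ∫ j, Real.exp (potential ep x j τ) * F (gaugeTransform ep τ j) ∂couplings 0 := by
  rw [quenched_eq_integral_couplingsDensity_mul, ← integral_const_mul,
    ← (measurePreserving_gaugeTransform ep τ).integral_comp
      (measurableEmbedding_gaugeTransform ep τ)]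
  simp only [couplingsDensity_gaugeTransform, mul_assoc]

lemma integrable_exp_potential_mul_gaugeTransform {F : (ι → ℝ) → ℝ}
    (hF : Integrable F (couplings x)) (τ : V → Bool) :
    Integrable (fun j ↦ Real.exp (potential ep x j τ) * F (gaugeTransform ep τ j))
      (couplings 0) := by
  have hcomp := ((measurePreserving_gaugeTransform ep τ).integrable_comp_emb
    (measurableEmbedding_gaugeTransform ep τ)).mpr ((integrable_couplings_iff x F).mp hF)
  simp only [Function.comp_def, couplingsDensity_gaugeTransform, mul_assoc] at hcomp
  exact (integrable_const_mul_iff (Real.exp_pos _).ne'.isUnit _).mp hcomp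

theorem quenched_eq_integral_partitionFn_mul_gibbs [Fintype V] [DecidableEq V]
    {F : (ι → ℝ) → ℝ} (hF : Integrable F (couplings x)) :
    quenched x F = Real.exp (-∑ b, x b ^ 2 / 2) / Fintype.card (V → Bool) *
      ∫ j, partitionFn ep x j * gibbs ep x j (fun τ ↦ F (gaugeTransform ep τ j))
        ∂couplings 0 := by
  have hcard : (Fintype.card (V → Bool) : ℝ) ≠ 0 := Nat.cast_ne_zero.mpr Fintype.card_ne_zero
  calc quenched x F = (Fintype.card (V → Bool) : ℝ)⁻¹ * ∑ _τ : V → Bool, quenched x F := by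
        rw [Finset.sum_const, Finset.card_univ, nsmul_eq_mul, inv_mul_cancel_left₀ hcard]
    _ = (Fintype.card (V → Bool) : ℝ)⁻¹ * ∑ τ, Real.exp (-∑ b, x b ^ 2 / 2) *
          ∫ j, Real.exp (potential ep x j τ) * F (gaugeTransform ep τ j) ∂couplings 0 := by
        simp only [← quenched_eq_integral_gaugeTransform]
    _ = _ := by
        rw [← Finset.mul_sum, ← integral_finsetSum _ fun τ _ ↦
          integrable_exp_potential_mul_gaugeTransform ep x hF τ]
        simp only [partitionFn_mul_gibbs, mul_comm (F _)]
        ring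

end Nishimori

theorem nishimori_squared_identity_general
    {V ι : Type*} [Fintype V] [DecidableEq V] [Fintype ι]
    (ep : ι → V × V)
    (x : ι → ℝ) (b b' : ι) :
    quenched x (fun j =>
        gibbs ep x j (fun S => bondSpin ep S b) *
          (gibbs ep x j (fun S => bondSpin ep S b')) ^ 2) =
      quenched x (fun j =>
        (gibbs ep x j (fun S => bondSpin ep S b)) ^ 2 *
          (gibbs ep x j (fun S => bondSpin ep S b')) ^ 2) := by
  have habs (c : ι) (j : ι → ℝ) : |gibbs ep x j (fun S => bondSpin ep S c)| ≤ 1 :=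
    abs_gibbs_le ep x j fun S ↦ (abs_bondSpin ep S c).le
  have hsq (τ : V → Bool) (c : ι) : bondSpin ep τ c ^ 2 = 1 := by
    rw [sq, bondSpin_mul_self]
  rw [quenched_eq_integral_partitionFn_mul_gibbs ep x,
    quenched_eq_integral_partitionFn_mul_gibbs ep x]
  · congr 2 with j
    simp only [gibbs_bondSpin_gaugeTransform, mul_pow, hsq, one_mul]
    simp only [mul_assoc, gibbs_mul_const, gibbs_const]
    ring
  all_goals
    refine Integrable.of_bound (by fun_prop) 1 (ae_of_all _ fun j ↦ ?_)
    simp only [Real.norm_eq_abs, abs_mul, abs_pow]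
    bound [habs b j, habs b' j]

/-- Nishimori gauge identity for squared correlations:
for all bonds `b, b'`, `[⟨S_b⟩⟨S_{b'}⟩²] = [⟨S_b⟩²⟨S_{b'}⟩²]`. -/
theorem nishimori_squared_identity
    {V ι : Type*} [Fintype V] [DecidableEq V] [Fintype ι]
    (ep : ι → V × V) (hep : ∀ b, (ep b).1 ≠ (ep b).2)
    (x : ι → ℝ) (hx : ∀ b, 0 ≤ x b) (b b' : ι) :
    quenched x (fun j =>
        gibbs ep x j (fun S => bondSpin ep S b) *
          (gibbs ep x j (fun S => bondSpin ep S b')) ^ 2) =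
      quenched x (fun j =>
        (gibbs ep x j (fun S => bondSpin ep S b)) ^ 2 *
          (gibbs ep x j (fun S => bondSpin ep S b')) ^ 2) :=
  nishimori_squared_identity_general ep x b b'
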